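/- arXiv:2411.16492 — 5 statements merged into one kernel-verified Lean document; each statement's English description precedes it below -/
import Mathlib

section
/- Let p and q be nonnegative integers and let x and z be complex numbers. Then C(2x+z−q, p) · C(x, q) = ∑_{i=0}^{p+q} β_i(p,q,z) · C(2x+z, i), where β_i(p,q,z) = (1/2^{2q}) ∑_{b=max(0,i−p)}^{q} 2^b · C(2q−b, q) · ∑_{a=0}^{b} C(p+b−q−z, a) · C(q+z, b−a) · C(a−q, p+b−i). -/
open Finset

/-- Generalized binomial coefficient `C(x,q) = x(x−1)⋯(x−q+1)/q!` for complex `x`. -/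
noncomputable def cchoose (x : ℂ) (q : ℕ) : ℂ := (∏ i ∈ Finset.range q, (x - i)) / (Nat.factorial q : ℂ)

/-- The complex number `β_i(p,q,z)` of Lemma 2.7. -/
noncomputable def betaC (i p q : ℕ) (z : ℂ) : ℂ :=
  (1 / 2 ^ (2 * q)) *
    ∑ b ∈ Finset.Icc (i - p) q, 2 ^ b * (Nat.choose (2 * q - b) q : ℂ) *
      ∑ a ∈ Finset.range (b + 1),
        cchoose ((p : ℂ) + b - q - z) a * cchoose ((q : ℂ) + z) (b - a) *
          cchoose ((a : ℂ) - q) (p + b - i)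

lemma cchoose_zero (x : ℂ) : cchoose x 0 = 1 := by simp [cchoose]

lemma descPoch_smeval (x : ℂ) (n : ℕ) :
    (descPochhammer ℤ n).smeval x = ∏ i ∈ Finset.range n, (x - i) := by
  induction n with
  | zero => simp [descPochhammer_zero]
  | succ n ih =>
    rw [descPochhammer_succ_right, Polynomial.smeval_mul, ih, Finset.prod_range_succ]
    congr 1
    simp [Polynomial.smeval_sub, Polynomial.smeval_X, Polynomial.smeval_natCast]

lemma cchoose_eq_ring_choose (x : ℂ) (n : ℕ) : cchoose x n = Ring.choose x n := by
  have h := Ring.descPochhammer_eq_factorial_smul_choose (R := ℂ) x n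
  rw [descPoch_smeval] at h
  rw [cchoose, h, nsmul_eq_mul]
  rw [mul_div_cancel_left₀]
  exact Nat.cast_ne_zero.mpr (Nat.factorial_ne_zero n)

lemma cchoose_natCast (n k : ℕ) : cchoose (n : ℂ) k = (Nat.choose n k : ℂ) := by
  rw [cchoose_eq_ring_choose, Ring.choose_natCast]

lemma cchoose_mul_cchoose (x : ℂ) (p m : ℕ) :
    cchoose x p * cchoose (x - p) m = (Nat.choose (p + m) p : ℂ) * cchoose x (p + m) := by
  have hprod : ∏ i ∈ Finset.range (p + m), (x - i) =
      (∏ i ∈ Finset.range p, (x - i)) * ∏ i ∈ Finset.range m, (x - p - i) := by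
    rw [Finset.prod_range_add]
    congr 1
    refine Finset.prod_congr rfl fun i _ => ?_
    push_cast
    ring
  have hfac : (Nat.choose (p + m) p * (Nat.factorial p * Nat.factorial m) : ℂ)
      = (Nat.factorial (p + m) : ℂ) := by
    rw [← Nat.cast_mul, ← Nat.cast_mul]
    norm_cast
    have := Nat.choose_mul_factorial_mul_factorial (Nat.le_add_right p m) (n := p + m)
    simpa [Nat.add_sub_cancel_left, mul_assoc] using this
  rw [cchoose, cchoose, cchoose, hprod]
  have h1 : (Nat.factorial p : ℂ) ≠ 0 := Nat.cast_ne_zero.mpr (Nat.factorial_ne_zero p)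
  have h2 : (Nat.factorial m : ℂ) ≠ 0 := Nat.cast_ne_zero.mpr (Nat.factorial_ne_zero m)
  have h3 : (Nat.factorial (p + m) : ℂ) ≠ 0 := Nat.cast_ne_zero.mpr (Nat.factorial_ne_zero _)
  field_simp
  rw [← hfac]
  ring

lemma vander (u v : ℂ) (n : ℕ) :
    cchoose (u + v) n = ∑ k ∈ Finset.range (n + 1), cchoose u k * cchoose v (n - k) := by
  rw [cchoose_eq_ring_choose, Ring.add_choose_eq n (Commute.all u v)]
  rw [Finset.Nat.sum_antidiagonal_eq_sum_range_succ_mk]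
  exact Finset.sum_congr rfl fun k _ => by rw [cchoose_eq_ring_choose, cchoose_eq_ring_choose]

lemma pascal (x : ℂ) (n : ℕ) : cchoose (x + 1) (n + 1) = cchoose x (n + 1) + cchoose x n := by
  rw [cchoose_eq_ring_choose, cchoose_eq_ring_choose, cchoose_eq_ring_choose,
    Ring.choose_succ_succ]
  ring

lemma cchoose_succ (x : ℂ) (n : ℕ) :
    (x - n) * cchoose x n = (n + 1 : ℂ) * cchoose x (n + 1) := by
  rw [cchoose, cchoose, Finset.prod_range_succ, Nat.factorial_succ]
  have h1 : (Nat.factorial n : ℂ) ≠ 0 := Nat.cast_ne_zero.mpr (Nat.factorial_ne_zero n)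
  have h2 : ((n : ℂ) + 1) ≠ 0 := by
    have : ((n + 1 : ℕ) : ℂ) ≠ 0 := Nat.cast_ne_zero.mpr (Nat.succ_ne_zero n)
    push_cast at this; exact this
  push_cast
  field_simp

lemma telescope (s : ℂ) (c : ℕ) :
    cchoose (s + c + 1) c = ∑ j ∈ Finset.range (c + 1), cchoose (s + j) j := by
  induction c with
  | zero => simp [cchoose_zero]
  | succ c ih =>
    have hp := pascal (s + c + 1) c
    rw [Finset.sum_range_succ, ← ih]
    have h1 : s + ((c : ℂ) + 1) + 1 = s + c + 1 + 1 := by push_cast; ring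
    have h2 : s + ((c : ℂ) + 1) = s + c + 1 := by push_cast; ring
    push_cast
    rw [h1, h2, hp]
    ring

lemma nat_dagger (q : ℕ) : ∀ e, e ≤ q →
    ∑ b ∈ Finset.Icc (q - e) q, 2 ^ (b + 1) * (b + 1) * Nat.choose (2 * q - b) q
      = (q + 1) * 2 ^ (q + 1 - e) * Nat.choose (q + 1 + e) (q + 1) := by
  intro e
  induction e with
  | zero =>
    intro _
    simp only [Nat.sub_zero, Finset.Icc_self, Finset.sum_singleton]
    have h1 : 2 * q - q = q := by omega
    have h2 : q + 1 + 0 = q + 1 := by omega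
    rw [h1, h2, Nat.choose_self, Nat.choose_self]
    ring
  | succ e ih =>
    intro he
    have he' : e ≤ q := Nat.le_of_succ_le he
    have hmem : q - (e + 1) ∉ Finset.Icc (q - e) q := by
      simp only [Finset.mem_Icc]; omega
    have hins : Finset.Icc (q - (e + 1)) q = insert (q - (e + 1)) (Finset.Icc (q - e) q) := by
      ext t; simp only [Finset.mem_Icc, Finset.mem_insert]; omega
    rw [hins, Finset.sum_insert hmem, ih he']
    have h1 : q - (e + 1) + 1 = q - e := by omega
    have h2 : 2 * q - (q - (e + 1)) = q + e + 1 := by omega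
    have h3 : q + 1 - e = (q - e) + 1 := by omega
    have h4 : q + 1 - (e + 1) = q - e := by omega
    have h5 : q + 1 + e = q + e + 1 := by omega
    have h6 : q + 1 + (e + 1) = q + e + 1 + 1 := by omega
    rw [h1, h2, h3, h4, h5, h6, Nat.choose_succ_succ' (q + e + 1) q]
    have key : Nat.choose (q + e + 1) (q + 1) * (q + 1) = Nat.choose (q + e + 1) q * (e + 1) := by
      have := Nat.choose_succ_right_eq (q + e + 1) q
      have hs : q + e + 1 - q = e + 1 := by omega
      rw [hs] at this
      exact this
    have hq1 : q + 1 = (q - e) + (e + 1) := by omega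
    rw [Nat.pow_succ]
    zify [he'] at key ⊢
    linear_combination ((2:ℤ) ^ (q - e)) * key

lemma stepA_rec (q : ℕ) (x : ℂ) :
    ((q : ℂ) + 1) * ∑ b ∈ Finset.range (q + 2),
        (2 ^ b * (Nat.choose (2 * (q + 1) - b) (q + 1)) : ℂ) * cchoose (2 * x - 2 * (q + 1) + b) b
    = 4 * (x - q) * ∑ b ∈ Finset.range (q + 1),
        (2 ^ b * (Nat.choose (2 * q - b) q) : ℂ) * cchoose (2 * x - 2 * q + b) b := by
  have step1 : ∀ b : ℕ, 4 * (x - q) * ((2 ^ b * (Nat.choose (2 * q - b) q) : ℂ) * cchoose (2 * x - 2 * q + b) b)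
      = (2 ^ (b+1) * (b + 1) * (Nat.choose (2 * q - b) q) : ℂ) * cchoose (2 * x - 2 * q + b) (b + 1) := by
    intro b
    have := cchoose_succ (2 * x - 2 * q + b) b
    have h4 : 4 * (x - (q:ℂ)) = 2 * ((2 * x - 2 * q + b) - b) := by push_cast; ring
    rw [h4]
    calc 2 * ((2 * x - 2 * (q:ℂ) + b) - b) * ((2 ^ b * (Nat.choose (2 * q - b) q) : ℂ) * cchoose (2 * x - 2 * q + b) b)
        = 2 * (2 ^ b * (Nat.choose (2 * q - b) q) : ℂ) * (((2 * x - 2 * (q:ℂ) + b) - b) * cchoose (2 * x - 2 * q + b) b) := by ring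
      _ = 2 * (2 ^ b * (Nat.choose (2 * q - b) q) : ℂ) * (((b:ℂ) + 1) * cchoose (2 * x - 2 * q + b) (b + 1)) := by rw [this]
      _ = (2 ^ (b+1) * ((b:ℂ) + 1) * (Nat.choose (2 * q - b) q) : ℂ) * cchoose (2 * x - 2 * q + b) (b + 1) := by ring
  have htel : ∀ b : ℕ, cchoose (2 * x - 2 * q + b) (b + 1)
      = ∑ j ∈ Finset.range (b + 2), cchoose (2 * x - 2 * ((q:ℂ) + 1) + j) j := by
    intro b
    have ht := telescope (2 * x - 2 * ((q:ℂ) + 1)) (b + 1)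
    have harg : 2 * x - 2 * ((q:ℂ) + 1) + (((b:ℕ)+1 : ℕ) : ℂ) + 1 = 2 * x - 2 * q + b := by push_cast; ring
    rw [harg] at ht
    exact ht
  rw [Finset.mul_sum, Finset.mul_sum]
  have hswap : ∑ b ∈ Finset.range (q + 1),
      4 * (x - ↑q) * ((2 ^ b * (Nat.choose (2 * q - b) q : ℂ)) * cchoose (2 * x - 2 * q + b) b)
      = ∑ j ∈ Finset.range (q + 2), ∑ b ∈ Finset.Icc (j - 1) q,
          2 ^ (b+1) * ((b:ℂ) + 1) * (Nat.choose (2 * q - b) q : ℂ) * cchoose (2 * x - 2 * ((q:ℂ) + 1) + j) j := by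
    rw [Finset.sum_congr rfl (fun b _ => step1 b)]
    rw [Finset.sum_congr rfl (fun b _ => by rw [htel b, Finset.mul_sum])]
    refine Finset.sum_comm' ?_
    intro b j
    simp only [Finset.mem_range, Finset.mem_Icc]
    omega
  rw [hswap]
  refine Finset.sum_congr rfl fun j hj => ?_
  simp only [Finset.mem_range] at hj
  rw [← Finset.sum_mul]
  have hnat : ∑ b ∈ Finset.Icc (j - 1) q, 2 ^ (b + 1) * (b + 1) * Nat.choose (2 * q - b) q
      = (q + 1) * 2 ^ j * Nat.choose (2 * (q + 1) - j) (q + 1) := by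
    rcases Nat.eq_zero_or_pos j with hj0 | hjpos
    · subst hj0
      have hnd := nat_dagger q q le_rfl
      have h0 : q - q = 0 := by omega
      rw [h0] at hnd
      have hd : (0:ℕ) - 1 = 0 := rfl
      rw [hd, hnd]
      have h7 : 2 * (q + 1) - 0 = (q + 1 + q) + 1 := by omega
      have h8 : q + 1 - q = 1 := by omega
      rw [h7, h8]
      have hsymm : Nat.choose (q + 1 + q) q = Nat.choose (q + 1 + q) (q + 1) := by
        have h := Nat.choose_symm (show q + 1 ≤ q + 1 + q by omega)
        have h9 : q + 1 + q - (q + 1) = q := by omega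
        rw [h9] at h
        exact h
      have hdouble : Nat.choose (q + 1 + q + 1) (q + 1) = 2 * Nat.choose (q + 1 + q) (q + 1) := by
        rw [Nat.choose_succ_succ' (q + 1 + q) q, hsymm]; omega
      rw [hdouble]; ring
    · have hje : j - 1 = q - (q + 1 - j) := by omega
      have hnd := nat_dagger q (q + 1 - j) (by omega)
      rw [hje, hnd]
      have h7 : q + 1 - (q + 1 - j) = j := by omega
      have h8 : q + 1 + (q + 1 - j) = 2 * (q + 1) - j := by omega
      rw [h7, h8]
  have hcoef : (∑ b ∈ Finset.Icc (j - 1) q, (2:ℂ) ^ (b + 1) * ((b:ℂ) + 1) * (Nat.choose (2 * q - b) q : ℂ))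
      = ((q:ℂ) + 1) * (2 ^ j * (Nat.choose (2 * (q + 1) - j) (q + 1) : ℂ)) := by
    calc (∑ b ∈ Finset.Icc (j - 1) q, (2:ℂ) ^ (b + 1) * ((b:ℂ) + 1) * (Nat.choose (2 * q - b) q : ℂ))
        = ((∑ b ∈ Finset.Icc (j - 1) q, 2 ^ (b + 1) * (b + 1) * Nat.choose (2 * q - b) q : ℕ) : ℂ) := by
          rw [Nat.cast_sum]
          refine Finset.sum_congr rfl fun b _ => ?_
          push_cast; ring
      _ = (((q + 1) * 2 ^ j * Nat.choose (2 * (q + 1) - j) (q + 1) : ℕ) : ℂ) := by rw [hnat]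
      _ = ((q:ℂ) + 1) * (2 ^ j * (Nat.choose (2 * (q + 1) - j) (q + 1) : ℂ)) := by push_cast; ring
  rw [hcoef]
  ring

lemma stepA : ∀ q : ℕ, ∀ x : ℂ,
    ((2:ℂ)^(2*q)) * cchoose x q = ∑ b ∈ Finset.range (q+1),
      2^b * (Nat.choose (2*q - b) q : ℂ) * cchoose (2*x - 2*(q:ℂ) + b) b := by
  intro q
  induction q with
  | zero => intro x; simp [cchoose_zero]
  | succ q ih =>
    intro x
    have hrec := stepA_rec q x
    have hq1 : ((q:ℂ) + 1) ≠ 0 := by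
      have h : ((q + 1 : ℕ) : ℂ) ≠ 0 := Nat.cast_ne_zero.mpr (Nat.succ_ne_zero q)
      push_cast at h; exact h
    have hcast : ((q + 1 : ℕ) : ℂ) = (q : ℂ) + 1 := by push_cast; ring
    rw [hcast]
    refine mul_left_cancel₀ hq1 ?_
    calc ((q:ℂ) + 1) * (2 ^ (2*(q+1)) * cchoose x (q+1))
        = (2:ℂ)^(2*q) * 4 * (((q:ℂ)+1) * cchoose x (q+1)) := by
          rw [show 2*(q+1) = 2*q + 2 from by omega, pow_add]
          ring
      _ = (2:ℂ)^(2*q) * 4 * ((x - q) * cchoose x q) := by rw [← cchoose_succ]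
      _ = 4 * (x - (q:ℂ)) * ((2:ℂ)^(2*q) * cchoose x q) := by ring
      _ = 4 * (x - (q:ℂ)) * ∑ b ∈ Finset.range (q+1),
            2^b * (Nat.choose (2*q - b) q : ℂ) * cchoose (2*x - 2*(q:ℂ) + b) b := by rw [ih x]
      _ = ((q:ℂ) + 1) * ∑ b ∈ Finset.range (q + 2),
            2 ^ b * (Nat.choose (2 * (q + 1) - b) (q + 1) : ℂ) * cchoose (2 * x - 2 * ((q:ℂ) + 1) + b) b := hrec.symm

lemma cchoose_swap (v : ℂ) (p m : ℕ) :
    cchoose v p * cchoose (v - p) m = cchoose v m * cchoose (v - m) p := by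
  rw [cchoose_mul_cchoose, cchoose_mul_cchoose]
  have h1 : (p + m).choose p = (m + p).choose m := by
    have h := Nat.choose_symm (show p ≤ p + m from Nat.le_add_right p m)
    have h2 : p + m - p = m := by omega
    rw [h2] at h
    rw [← h, Nat.add_comm m p]
  rw [h1, Nat.add_comm m p]

lemma claimA (v w : ℂ) (p b : ℕ) :
    cchoose v p * cchoose (v - w + b) b
      = ∑ m ∈ Finset.range (b + 1),
          cchoose v m * cchoose (v - m) p * cchoose ((p:ℂ) + b - w) (b - m) := by
  have harg : v - w + b = (v - p) + ((p:ℂ) + b - w) := by ring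
  rw [harg, vander, Finset.mul_sum]
  refine Finset.sum_congr rfl fun m _ => ?_
  rw [← mul_assoc, cchoose_swap]

lemma inner_k (w : ℂ) (p b k : ℕ) (hk : k ≤ b) :
    ∑ a ∈ Finset.range (b + 1),
        cchoose ((p:ℂ) + b - w) a * cchoose w (b - a) * (Nat.choose a k : ℂ)
      = (Nat.choose (p + b - k) (b - k) : ℂ) * cchoose ((p:ℂ) + b - w) k := by
  set f : ℕ → ℂ := fun a => cchoose ((p:ℂ) + b - w) a * cchoose w (b - a) * (Nat.choose a k : ℂ)
  have hsplit : ∑ a ∈ Finset.range (b + 1), f a = ∑ a ∈ Finset.Ico k (b + 1), f a := by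
    rw [Finset.range_eq_Ico, ← Finset.sum_Ico_consecutive f (Nat.zero_le k) (by omega : k ≤ b + 1)]
    have hz : ∑ a ∈ Finset.Ico 0 k, f a = 0 := by
      refine Finset.sum_eq_zero fun a ha => ?_
      simp only [Finset.mem_Ico] at ha
      simp [f, Nat.choose_eq_zero_of_lt ha.2]
    rw [hz, zero_add]
  rw [hsplit, Finset.sum_Ico_eq_sum_range]
  have hb1 : b + 1 - k = (b - k) + 1 := by omega
  rw [hb1]
  have hterm : ∀ a ∈ Finset.range ((b - k) + 1),
      f (k + a) = cchoose ((p:ℂ) + b - w) k *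
        (cchoose ((p:ℂ) + b - w - k) a * cchoose w ((b - k) - a)) := by
    intro a ha
    simp only [Finset.mem_range] at ha
    have h1 : cchoose ((p:ℂ) + b - w) k * cchoose ((p:ℂ) + b - w - k) a
        = (Nat.choose (k + a) k : ℂ) * cchoose ((p:ℂ) + b - w) (k + a) :=
      cchoose_mul_cchoose _ k a
    have h2 : b - (k + a) = (b - k) - a := by omega
    simp only [f, h2]
    linear_combination (-(cchoose w (b - k - a))) * h1
  rw [Finset.sum_congr rfl hterm, ← Finset.mul_sum]
  have hv : ∑ a ∈ Finset.range ((b - k) + 1),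
      cchoose ((p:ℂ) + b - w - k) a * cchoose w ((b - k) - a)
      = cchoose (((p:ℂ) + b - w - k) + w) (b - k) := (vander _ _ _).symm
  rw [hv]
  have harg : ((p:ℂ) + b - w - k) + w = ((p + b - k : ℕ) : ℂ) := by
    push_cast [Nat.cast_sub (show k ≤ p + b by omega)]
    ring
  rw [harg, cchoose_natCast, mul_comm]

lemma star' (v w : ℂ) (p b : ℕ) :
    ∑ a ∈ Finset.range (b + 1),
        cchoose ((p:ℂ) + b - w) a * cchoose w (b - a) * cchoose (v + a) (p + b)
      = cchoose v p * cchoose (v - w + b) b := by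
  have hexp : ∀ a ∈ Finset.range (b + 1),
      cchoose ((p:ℂ) + b - w) a * cchoose w (b - a) * cchoose (v + a) (p + b)
      = ∑ k ∈ Finset.range (p + b + 1),
          cchoose ((p:ℂ) + b - w) a * cchoose w (b - a) * (Nat.choose a k : ℂ)
            * cchoose v (p + b - k) := by
    intro a _
    have h1 : v + (a:ℂ) = (a:ℂ) + v := by ring
    rw [h1, vander, Finset.mul_sum]
    refine Finset.sum_congr rfl fun k _ => ?_
    rw [cchoose_natCast]
    ring
  rw [Finset.sum_congr rfl hexp, Finset.sum_comm]
  have hcol : ∀ k ∈ Finset.range (p + b + 1),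
      ∑ a ∈ Finset.range (b + 1),
        cchoose ((p:ℂ) + b - w) a * cchoose w (b - a) * (Nat.choose a k : ℂ)
          * cchoose v (p + b - k)
      = (∑ a ∈ Finset.range (b + 1),
          cchoose ((p:ℂ) + b - w) a * cchoose w (b - a) * (Nat.choose a k : ℂ))
          * cchoose v (p + b - k) := fun k _ => by rw [Finset.sum_mul]
  rw [Finset.sum_congr rfl hcol]
  have hsub : Finset.range (b + 1) ⊆ Finset.range (p + b + 1) :=
    Finset.range_subset_range.mpr (by omega)
  rw [← Finset.sum_subset hsub (fun k _ hk2 => by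
    simp only [Finset.mem_range, not_lt] at hk2
    have hz : ∑ a ∈ Finset.range (b + 1),
        cchoose ((p:ℂ) + b - w) a * cchoose w (b - a) * (Nat.choose a k : ℂ) = 0 := by
      refine Finset.sum_eq_zero fun a ha => ?_
      simp only [Finset.mem_range] at ha
      have : Nat.choose a k = 0 := Nat.choose_eq_zero_of_lt (by omega)
      simp [this]
    rw [hz, zero_mul])]
  have hval : ∀ k ∈ Finset.range (b + 1),
      (∑ a ∈ Finset.range (b + 1),
          cchoose ((p:ℂ) + b - w) a * cchoose w (b - a) * (Nat.choose a k : ℂ))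
          * cchoose v (p + b - k)
      = (Nat.choose (p + b - k) (b - k) : ℂ) * cchoose ((p:ℂ) + b - w) k
          * cchoose v (p + b - k) := by
    intro k hk
    simp only [Finset.mem_range] at hk
    rw [inner_k w p b k (by omega)]
  rw [Finset.sum_congr rfl hval]
  rw [← Finset.sum_range_reflect]
  rw [claimA]
  refine Finset.sum_congr rfl fun j hj => ?_
  simp only [Finset.mem_range] at hj
  have e0 : b + 1 - 1 - j = b - j := by omega
  have e1 : p + b - (b - j) = p + j := by omega
  have e2 : b - (b - j) = j := by omega
  rw [e0, e1, e2]
  have h3 : cchoose v j * cchoose (v - j) p = (Nat.choose (j + p) j : ℂ) * cchoose v (j + p) :=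
    cchoose_mul_cchoose v j p
  have e3 : j + p = p + j := by omega
  rw [e3] at h3
  linear_combination (-(cchoose ((p:ℂ) + (b:ℂ) - w) (b - j))) * h3

/-- Lemma 2.7: `C(2x+z−q, p) · C(x, q) = ∑_{i=0}^{p+q} β_i(p,q,z) · C(2x+z, i)`. -/
theorem binomial_product_expansion (p q : ℕ) (x z : ℂ) :
    cchoose (2 * x + z - q) p * cchoose x q =
      ∑ i ∈ Finset.range (p + q + 1), betaC i p q z * cchoose (2 * x + z) i := by
  set y : ℂ := 2 * x + z with hy
  set v : ℂ := 2 * x + z - q with hv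
  -- notation for the inner pieces
  set G : ℕ → ℕ → ℕ → ℂ := fun b a i =>
    cchoose ((p : ℂ) + b - q - z) a * cchoose ((q : ℂ) + z) (b - a) *
      cchoose ((a : ℂ) - q) (p + b - i) with hG
  have step1 : ∑ i ∈ Finset.range (p + q + 1), betaC i p q z * cchoose y i
      = (1 / 2 ^ (2 * q)) * ∑ i ∈ Finset.range (p + q + 1), ∑ b ∈ Finset.Icc (i - p) q,
          2 ^ b * (Nat.choose (2 * q - b) q : ℂ) *
            ∑ a ∈ Finset.range (b + 1), G b a i * cchoose y i := by
    rw [Finset.mul_sum]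
    refine Finset.sum_congr rfl fun i _ => ?_
    rw [betaC, mul_assoc]
    congr 1
    rw [Finset.sum_mul]
    refine Finset.sum_congr rfl fun b _ => ?_
    rw [mul_assoc]
    congr 1
    rw [Finset.sum_mul]
  rw [step1]
  have step2 : ∑ i ∈ Finset.range (p + q + 1), ∑ b ∈ Finset.Icc (i - p) q,
          2 ^ b * (Nat.choose (2 * q - b) q : ℂ) *
            ∑ a ∈ Finset.range (b + 1), G b a i * cchoose y i
      = ∑ b ∈ Finset.range (q + 1), ∑ i ∈ Finset.range (p + b + 1),
          2 ^ b * (Nat.choose (2 * q - b) q : ℂ) *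
            ∑ a ∈ Finset.range (b + 1), G b a i * cchoose y i := by
    refine Finset.sum_comm' ?_
    intro i b
    simp only [Finset.mem_range, Finset.mem_Icc]
    omega
  rw [step2]
  have step3 : ∀ b ∈ Finset.range (q + 1),
      ∑ i ∈ Finset.range (p + b + 1),
          2 ^ b * (Nat.choose (2 * q - b) q : ℂ) *
            ∑ a ∈ Finset.range (b + 1), G b a i * cchoose y i
      = 2 ^ b * (Nat.choose (2 * q - b) q : ℂ) *
          (cchoose v p * cchoose (2 * x - 2 * (q:ℂ) + b) b) := by
    intro b _
    rw [← Finset.mul_sum]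
    congr 1
    rw [Finset.sum_comm]
    have inner : ∀ a ∈ Finset.range (b + 1),
        ∑ i ∈ Finset.range (p + b + 1), G b a i * cchoose y i
        = cchoose ((p:ℂ) + b - ((q:ℂ) + z)) a * cchoose ((q:ℂ) + z) (b - a) *
            cchoose (v + a) (p + b) := by
      intro a _
      have hsum : ∑ i ∈ Finset.range (p + b + 1), G b a i * cchoose y i
          = cchoose ((p : ℂ) + b - q - z) a * cchoose ((q : ℂ) + z) (b - a) *
              ∑ i ∈ Finset.range (p + b + 1), cchoose y i * cchoose ((a : ℂ) - q) (p + b - i) := by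
        rw [Finset.mul_sum]
        refine Finset.sum_congr rfl fun i _ => ?_
        simp only [hG]
        ring
      rw [hsum, ← vander y ((a:ℂ) - q) (p + b)]
      have e1 : y + ((a:ℂ) - q) = v + a := by rw [hy, hv]; ring
      have e2 : (p:ℂ) + b - ((q:ℂ) + z) = (p:ℂ) + b - q - z := by ring
      rw [e1, e2]
    rw [Finset.sum_congr rfl inner, star' v ((q:ℂ) + z) p b]
    have e3 : v - ((q:ℂ) + z) + b = 2 * x - 2 * (q:ℂ) + b := by rw [hv]; ring
    rw [e3]
  rw [Finset.sum_congr rfl step3]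
  have step4 : ∑ b ∈ Finset.range (q + 1),
      2 ^ b * (Nat.choose (2 * q - b) q : ℂ) *
        (cchoose v p * cchoose (2 * x - 2 * (q:ℂ) + b) b)
      = cchoose v p * (((2:ℂ)^(2*q)) * cchoose x q) := by
    rw [stepA q x, Finset.mul_sum]
    refine Finset.sum_congr rfl fun b _ => ?_
    ring
  rw [step4]
  have h2 : ((2:ℂ) ^ (2 * q)) ≠ 0 := pow_ne_zero _ two_ne_zero
  field_simp
end

section
/- For all integers m ≥ 1 and k,p ≥ 0, A_S(m,k,p) = A_S(m−1,k,p) + (m−k+1)·A_S(m−1,k−1,p) + (m−p)·A_S(m−1,k−1,p−1) + (m−p)(m−k+1)·A_S(m−1,k−2,p−1), with the convention that A_S(m',k',p') = 0 whenever k' < 0 or p' < 0. -/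
/-!
A piece `(i, j)` constrains only its column `i` and its diagonal `i - j`; rows are free. The main
diagonal and the part of column `m` below it are lines, i.e. each holds at most one piece of a
placement. A piece `(c, c)` can be added to a placement of `k - 1` pieces off the main diagonal in
any of its `m - (k - 1)` free columns. A piece `(m, j)` with `j < m` can be added to a placement
avoiding both lines exactly when its diagonal `m - j ∈ [1, m - 1]` is not one of the `p - 1`
diagonals of the other pieces below the diagonal: `m - p` choices. Finally, raising by one the row
of every piece `(i, j)` with `i ≤ j` on the `(m - 1) × (m - 1)` board preserves attacks and
identifies its placements with those on the `m × m` board avoiding both lines.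
-/

open Finset

/-- `anassaCount3 m k p` is the number of `k`-element subsets `P` of `{1,…,m} × {1,…,m}`
such that any two distinct elements `(i,j)` and `(i',j')` of `P` satisfy `i ≠ i'` and
`i−j ≠ i'−j'`, and exactly `p` elements `(i,j)` of `P` satisfy `j < i` (nonattacking
anassas on the `m × m` board with exactly `p` pieces strictly below the main diagonal). -/
def anassaCount3 (m k p : ℕ) : ℕ :=
  (((Finset.Icc 1 m ×ˢ Finset.Icc 1 m).powersetCard k).filter
    (fun P => (∀ a ∈ P, ∀ b ∈ P, a ≠ b →
        a.1 ≠ b.1 ∧ (a.1 : ℤ) - a.2 ≠ (b.1 : ℤ) - b.2) ∧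
      (P.filter (fun a => a.2 < a.1)).card = p)).card

/-- `anassaCount3` extended to integer arguments `k, p`, vanishing when `k < 0` or `p < 0`. -/
def anassaCount3Z (m : ℕ) (k p : ℤ) : ℤ :=
  if 0 ≤ k ∧ 0 ≤ p then anassaCount3 m k.toNat p.toNat else 0

namespace Finset

theorem card_filter_apply_notMem {α β : Type*} [DecidableEq β] {s : Finset α} {g : α → β}
    (hg : Set.InjOn g s) (t : Finset β) :
    #(s.filter fun x => g x ∉ t) = #(s.image g \ t) := by
  rw [sdiff_eq_filter, filter_image, card_image_of_injOn (hg.mono (filter_subset _ s))]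

end Finset

namespace Anassa

def diag (a : ℕ × ℕ) : ℤ := a.1 - a.2

def Attacks (a b : ℕ × ℕ) : Prop := a.1 = b.1 ∨ diag a = diag b

instance : DecidableRel Attacks := fun _ _ => instDecidableOr

theorem attacks_comm {a b : ℕ × ℕ} : Attacks a b ↔ Attacks b a := by
  simp only [Attacks, eq_comm]

def IsNonattacking (P : Finset (ℕ × ℕ)) : Prop :=
  (P : Set (ℕ × ℕ)).Pairwise fun a b => ¬Attacks a b

instance : DecidablePred IsNonattacking := fun P =>
  inferInstanceAs (Decidable ((P : Set (ℕ × ℕ)).Pairwise _))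

section IsNonattacking

variable {P Q L : Finset (ℕ × ℕ)} {a b x : ℕ × ℕ}

theorem isNonattacking_iff :
    IsNonattacking P ↔
      ∀ a ∈ P, ∀ b ∈ P, a ≠ b → a.1 ≠ b.1 ∧ diag a ≠ diag b := by
  simp only [IsNonattacking, Set.Pairwise, mem_coe, Attacks, not_or]

theorem IsNonattacking.mono (hQ : IsNonattacking Q) (hPQ : P ⊆ Q) : IsNonattacking P :=
  Set.Pairwise.mono (coe_subset.2 hPQ) hQ

theorem IsNonattacking.eq_of_attacks (hP : IsNonattacking P) (ha : a ∈ P) (hb : b ∈ P)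
    (hab : Attacks a b) : a = b :=
  by_contra fun hne => hP ha hb hne hab

theorem IsNonattacking.injOn_fst (hP : IsNonattacking P) :
    Set.InjOn Prod.fst (P : Set (ℕ × ℕ)) :=
  fun _ ha _ hb h => hP.eq_of_attacks ha hb (.inl h)

theorem IsNonattacking.injOn_diag (hP : IsNonattacking P) : Set.InjOn diag (P : Set (ℕ × ℕ)) :=
  fun _ ha _ hb h => hP.eq_of_attacks ha hb (.inr h)

theorem isNonattacking_insert (hx : x ∉ Q) :
    IsNonattacking (insert x Q) ↔ IsNonattacking Q ∧ ∀ b ∈ Q, ¬Attacks x b := by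
  rw [IsNonattacking, coe_insert, Set.pairwise_insert_of_notMem hx]
  simp only [mem_coe, attacks_comm (a := x), and_self]
  rfl

theorem IsNonattacking.sdiff_eq_erase (hP : IsNonattacking P)
    (hL : (L : Set (ℕ × ℕ)).Pairwise Attacks) (hxP : x ∈ P) (hxL : x ∈ L) :
    P \ L = P.erase x := by
  ext y
  simp only [mem_sdiff, mem_erase]
  constructor
  · rintro ⟨hyP, hyL⟩
    exact ⟨fun hyx => hyL (hyx ▸ hxL), hyP⟩
  · rintro ⟨hyx, hyP⟩
    exact ⟨hyP, fun hyL => hyx (hP.eq_of_attacks hyP hxP (hL hyL hxL hyx))⟩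

end IsNonattacking

def belowCount (P : Finset (ℕ × ℕ)) : ℕ := #(P.filter fun a => a.2 < a.1)

theorem belowCount_insert {Q : Finset (ℕ × ℕ)} {x : ℕ × ℕ} (hx : x ∉ Q) :
    (belowCount (insert x Q) : ℤ) = belowCount Q + if x.2 < x.1 then 1 else 0 := by
  unfold belowCount
  rw [filter_insert]
  split_ifs
  · rw [card_insert_of_notMem fun h => hx (mem_filter.1 h).1]
    push_cast
    rfl
  · simp

/-- Indexed by integers so that negative `k` or `p` give the empty family, as in `anassaCount3Z`. -/
def placements (B : Finset (ℕ × ℕ)) (k p : ℤ) : Finset (Finset (ℕ × ℕ)) :=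
  B.powerset.filter fun P => IsNonattacking P ∧ (#P : ℤ) = k ∧ (belowCount P : ℤ) = p

theorem mem_placements {B P : Finset (ℕ × ℕ)} {k p : ℤ} :
    P ∈ placements B k p ↔
      P ⊆ B ∧ IsNonattacking P ∧ (#P : ℤ) = k ∧ (belowCount P : ℤ) = p := by
  rw [placements, mem_filter, mem_powerset]

def board (m : ℕ) : Finset (ℕ × ℕ) := Icc 1 m ×ˢ Icc 1 m

theorem anassaCount3Z_eq_card (m : ℕ) (k p : ℤ) :
    anassaCount3Z m k p = #(placements (board m) k p) := by
  unfold anassaCount3Z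
  split_ifs with h
  · lift k to ℕ using h.1
    lift p to ℕ using h.2
    unfold anassaCount3
    congr 2
    ext P
    simp only [Int.toNat_natCast, mem_filter, mem_powersetCard, mem_placements, board,
      isNonattacking_iff, diag, belowCount, Nat.cast_inj]
    tauto
  · symm
    rw [Nat.cast_eq_zero, card_eq_zero, eq_empty_iff_forall_notMem]
    intro P hP
    obtain ⟨-, -, hk, hp⟩ := mem_placements.1 hP
    omega

theorem card_placements_eq_add_sum {B L : Finset (ℕ × ℕ)} (hLB : L ⊆ B)
    (hL : (L : Set (ℕ × ℕ)).Pairwise Attacks) {δ : ℤ}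
    (hδ : ∀ x ∈ L, (if x.2 < x.1 then 1 else 0 : ℤ) = δ) (k p : ℤ) :
    (#(placements B k p) : ℤ) = #(placements (B \ L) k p) +
      ∑ Q ∈ placements (B \ L) (k - 1) (p - δ),
        (#(L.filter fun x => IsNonattacking (insert x Q)) : ℤ) := by
  have hmiss : (placements B k p).filter (Disjoint · L) = placements (B \ L) k p := by
    ext P
    simp only [mem_filter, mem_placements, subset_sdiff]
    tauto
  have hmaps : Set.MapsTo (· \ L) ((placements B k p).filter (¬Disjoint · L))
      (placements (B \ L) (k - 1) (p - δ)) := by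
    intro P hP
    dsimp only
    obtain ⟨hP, hPL⟩ := mem_filter.1 hP
    obtain ⟨x, hxP, hxL⟩ := not_disjoint_iff.1 hPL
    obtain ⟨hPB, hPna, hk, hp⟩ := mem_placements.1 hP
    have hbelow := belowCount_insert (notMem_erase x P)
    rw [insert_erase hxP, hδ x hxL] at hbelow
    refine mem_placements.2 ⟨sdiff_subset_sdiff hPB le_rfl, hPna.mono sdiff_subset, ?_, ?_⟩
    · rw [hPna.sdiff_eq_erase hL hxP hxL, card_erase_of_mem hxP]
      have := card_pos.2 ⟨x, hxP⟩
      omega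
    · rw [hPna.sdiff_eq_erase hL hxP hxL]
      omega
  have hfiber : ∀ Q ∈ placements (B \ L) (k - 1) (p - δ),
      #{P ∈ (placements B k p).filter (¬Disjoint · L) | P \ L = Q} =
        #(L.filter fun x => IsNonattacking (insert x Q)) := by
    intro Q hQ
    obtain ⟨hQB, hQna, hk, hp⟩ := mem_placements.1 hQ
    have hQL : Disjoint Q L := (subset_sdiff.1 hQB).2
    have hnotMem : ∀ x ∈ L, x ∉ Q := fun x hxL hxQ => disjoint_left.1 hQL hxQ hxL
    symm
    refine card_nbij (insert · Q) (fun x hx => ?_) (fun x hx y hy hxy => ?_) (fun P hP => ?_)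
    · dsimp only
      obtain ⟨hxL, hna⟩ := mem_filter.1 hx
      have hbelow := belowCount_insert (hnotMem x hxL)
      rw [hδ x hxL] at hbelow
      refine mem_filter.2 ⟨mem_filter.2 ⟨mem_placements.2 ⟨?_, hna, ?_, by omega⟩,
        not_disjoint_iff.2 ⟨x, mem_insert_self x Q, hxL⟩⟩, ?_⟩
      · exact insert_subset (hLB hxL) (hQB.trans sdiff_subset)
      · rw [card_insert_of_notMem (hnotMem x hxL)]
        omega
      · rw [insert_sdiff_of_mem Q hxL, hQL.sdiff_eq_left]
    · have hxy' : x ∈ insert y Q := by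
        rw [← show insert x Q = insert y Q from hxy]
        exact mem_insert_self x Q
      exact (mem_insert.1 hxy').resolve_right (hnotMem x (mem_filter.1 hx).1)
    · obtain ⟨hPmeets, rfl⟩ := mem_filter.1 hP
      obtain ⟨hPS, hPL⟩ := mem_filter.1 hPmeets
      obtain ⟨x, hxP, hxL⟩ := not_disjoint_iff.1 hPL
      have hPna := (mem_placements.1 hPS).2.1
      rw [hPna.sdiff_eq_erase hL hxP hxL]
      exact ⟨x, mem_filter.2 ⟨hxL, by rwa [insert_erase hxP]⟩, insert_erase hxP⟩
  rw [← card_filter_add_card_filter_not (s := placements B k p) (Disjoint · L), hmiss,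
    card_eq_sum_card_fiberwise hmaps, Nat.cast_add, Nat.cast_sum]
  congr 1
  exact sum_congr rfl fun Q hQ => congrArg _ (hfiber Q hQ)

def mainDiagonal (m : ℕ) : Finset (ℕ × ℕ) := (board m).filter fun a => a.1 = a.2

def lastColumnBelow (m : ℕ) : Finset (ℕ × ℕ) := (board m).filter fun a => a.1 = m ∧ a.2 < m

theorem image_fst_mainDiagonal (m : ℕ) : (mainDiagonal m).image Prod.fst = Icc 1 m := by
  ext c
  simp only [mainDiagonal, board, mem_image, mem_filter, mem_product, mem_Icc, Prod.exists]
  constructor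
  · rintro ⟨a, b, ⟨h, rfl⟩, rfl⟩
    exact h.1
  · exact fun h => ⟨c, c, ⟨⟨h, h⟩, rfl⟩, rfl⟩

theorem injOn_fst_mainDiagonal (m : ℕ) :
    Set.InjOn Prod.fst (mainDiagonal m : Set (ℕ × ℕ)) := by
  intro x hx y hy hxy
  have := (mem_filter.1 hx).2
  have := (mem_filter.1 hy).2
  exact Prod.ext hxy (by omega)

theorem image_diag_lastColumnBelow (m : ℕ) :
    (lastColumnBelow m).image diag = Icc 1 ((m : ℤ) - 1) := by
  ext d
  simp only [lastColumnBelow, board, diag, mem_image, mem_filter, mem_product, mem_Icc,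
    Prod.exists]
  constructor
  · rintro ⟨a, b, ⟨h, rfl, hb⟩, rfl⟩
    omega
  · intro h
    exact ⟨m, ((m : ℤ) - d).toNat, ⟨by omega, rfl, by omega⟩, by omega⟩

theorem injOn_diag_lastColumnBelow (m : ℕ) :
    Set.InjOn diag (lastColumnBelow m : Set (ℕ × ℕ)) := by
  intro x hx y hy hxy
  have := (mem_filter.1 hx).2
  have := (mem_filter.1 hy).2
  simp only [diag] at hxy
  exact Prod.ext (by omega) (by omega)

theorem card_filter_isNonattacking_insert_mainDiagonal {m : ℕ} {Q : Finset (ℕ × ℕ)}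
    (hQB : Q ⊆ board m \ mainDiagonal m) (hQ : IsNonattacking Q) :
    (#((mainDiagonal m).filter fun x => IsNonattacking (insert x Q)) : ℤ) = m - #Q := by
  have hQcells : ∀ a ∈ Q, 1 ≤ a.1 ∧ a.1 ≤ m ∧ a.1 ≠ a.2 := by
    intro a ha
    have := hQB ha
    simp only [mem_sdiff, mainDiagonal, board, mem_filter, mem_product, mem_Icc] at this
    omega
  have hfilter : (mainDiagonal m).filter (fun x => IsNonattacking (insert x Q)) =
      (mainDiagonal m).filter (fun x => x.1 ∉ Q.image Prod.fst) := by
    refine filter_congr fun x hx => ?_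
    have hxx : x.1 = x.2 := (mem_filter.1 hx).2
    rw [isNonattacking_insert fun hxQ => (mem_sdiff.1 (hQB hxQ)).2 hx, mem_image]
    simp only [hQ, true_and, Attacks, diag, not_or, not_exists, not_and]
    exact forall₂_congr fun b hb => by have := hQcells b hb; omega
  have hsub : Q.image Prod.fst ⊆ Icc 1 m := by
    intro c hc
    obtain ⟨a, ha, rfl⟩ := mem_image.1 hc
    exact mem_Icc.2 ⟨(hQcells a ha).1, (hQcells a ha).2.1⟩
  have hcard := card_le_card hsub
  rw [card_image_of_injOn hQ.injOn_fst, Nat.card_Icc] at hcard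
  rw [hfilter, card_filter_apply_notMem (injOn_fst_mainDiagonal m), image_fst_mainDiagonal,
    card_sdiff_of_subset hsub, card_image_of_injOn hQ.injOn_fst, Nat.card_Icc]
  omega

theorem card_filter_isNonattacking_insert_lastColumnBelow {m : ℕ} (hm : 1 ≤ m)
    {Q : Finset (ℕ × ℕ)} (hQB : Q ⊆ (board m \ mainDiagonal m) \ lastColumnBelow m)
    (hQ : IsNonattacking Q) :
    (#((lastColumnBelow m).filter fun x => IsNonattacking (insert x Q)) : ℤ) =
      m - 1 - belowCount Q := by
  have hQcells : ∀ a ∈ Q, 1 ≤ a.1 ∧ a.1 < m ∧ 1 ≤ a.2 ∧ a.2 ≤ m := by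
    intro a ha
    have := hQB ha
    simp only [mem_sdiff, mainDiagonal, lastColumnBelow, board, mem_filter, mem_product,
      mem_Icc] at this
    omega
  have hfilter : (lastColumnBelow m).filter (fun x => IsNonattacking (insert x Q)) =
      (lastColumnBelow m).filter (fun x => diag x ∉ Q.image diag) := by
    refine filter_congr fun x hx => ?_
    have hxm : x.1 = m := (mem_filter.1 hx).2.1
    rw [isNonattacking_insert fun hxQ => (mem_sdiff.1 (hQB hxQ)).2 hx, mem_image]
    simp only [hQ, true_and, Attacks, not_or, not_exists, not_and]
    exact forall₂_congr fun b hb => by have := hQcells b hb; constructor <;> intro h <;> omega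
  have hbelow : Q.image diag ∩ Icc 1 ((m : ℤ) - 1) =
      (Q.filter fun a => a.2 < a.1).image diag := by
    rw [← filter_mem_eq_inter, filter_image]
    congr 1
    refine filter_congr fun a ha => ?_
    have := hQcells a ha
    simp only [diag, mem_Icc]
    omega
  have hinj := hQ.injOn_diag.mono (coe_subset.2 (filter_subset (fun a => a.2 < a.1) Q))
  have hcard : #((Q.filter fun a => a.2 < a.1).image diag) ≤ #(Icc 1 ((m : ℤ) - 1)) :=
    hbelow ▸ card_le_card inter_subset_right
  rw [card_image_of_injOn hinj, Int.card_Icc] at hcard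
  rw [hfilter, card_filter_apply_notMem (injOn_diag_lastColumnBelow m),
    image_diag_lastColumnBelow, card_sdiff, hbelow, card_image_of_injOn hinj, Int.card_Icc]
  unfold belowCount
  omega

theorem map_mem_placements_iff (f : ℕ × ℕ ↪ ℕ × ℕ)
    (hf : ∀ a b, Attacks (f a) (f b) ↔ Attacks a b)
    (hbelow : ∀ a, (f a).2 < (f a).1 ↔ a.2 < a.1) {B P : Finset (ℕ × ℕ)} {k p : ℤ} :
    P.map f ∈ placements (B.map f) k p ↔ P ∈ placements B k p := by
  have hna : IsNonattacking (P.map f) ↔ IsNonattacking P := by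
    rw [IsNonattacking, coe_map, f.injective.injOn.pairwise_image]
    show (P : Set (ℕ × ℕ)).Pairwise (fun a b => ¬Attacks (f a) (f b)) ↔ _
    simp only [hf]
    rfl
  simp only [mem_placements, map_subset_map, hna, card_map, belowCount, filter_map,
    Function.comp_def, hbelow]

theorem card_placements_map (f : ℕ × ℕ ↪ ℕ × ℕ)
    (hf : ∀ a b, Attacks (f a) (f b) ↔ Attacks a b)
    (hbelow : ∀ a, (f a).2 < (f a).1 ↔ a.2 < a.1) (B : Finset (ℕ × ℕ)) (k p : ℤ) :
    #(placements (B.map f) k p) = #(placements B k p) := by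
  symm
  refine card_nbij (map f) (fun P hP => (map_mem_placements_iff f hf hbelow).2 hP)
    (map_injective f).injOn (fun P hP => ?_)
  obtain ⟨Q, -, rfl⟩ := subset_map_iff.1 (mem_placements.1 hP).1
  exact ⟨Q, (map_mem_placements_iff f hf hbelow).1 hP, rfl⟩

/-- On diagonals, `raise` is the strictly increasing map fixing `d ≥ 1` and sending `d ≤ 0` to
`d - 1`; hence it preserves attacks. -/
def raise : ℕ × ℕ → ℕ × ℕ
  | (i, j) => if j < i then (i, j) else (i, j + 1)

theorem raise_injective : Function.Injective raise := by
  rintro ⟨i, j⟩ ⟨i', j'⟩ h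
  simp only [raise] at h
  split_ifs at h <;>
  · simp only [Prod.mk.injEq] at h ⊢
    omega

theorem below_raise_iff (a : ℕ × ℕ) : (raise a).2 < (raise a).1 ↔ a.2 < a.1 := by
  obtain ⟨i, j⟩ := a
  simp only [raise]
  split_ifs <;> omega

theorem attacks_raise_iff (a b : ℕ × ℕ) : Attacks (raise a) (raise b) ↔ Attacks a b := by
  obtain ⟨i, j⟩ := a
  obtain ⟨i', j'⟩ := b
  simp only [raise, Attacks, diag]
  split_ifs <;> omega

theorem map_raise_board (m : ℕ) :
    (board (m - 1)).map ⟨raise, raise_injective⟩ =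
      (board m \ mainDiagonal m) \ lastColumnBelow m := by
  ext ⟨i, j⟩
  simp only [mem_map, Function.Embedding.coeFn_mk, mem_sdiff, mainDiagonal, lastColumnBelow,
    board, mem_filter, mem_product, mem_Icc, Prod.exists]
  constructor
  · rintro ⟨a, b, hab, h⟩
    simp only [raise] at h
    split_ifs at h <;> simp only [Prod.mk.injEq] at h <;> omega
  · intro hij
    by_cases h : j < i
    · exact ⟨i, j, by omega, by simp [raise, h]⟩
    · refine ⟨i, j - 1, by omega, ?_⟩
      simp only [raise]
      split_ifs <;> exact Prod.ext rfl (by omega)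

theorem card_placements_board (m : ℕ) (k p : ℤ) :
    (#(placements (board m) k p) : ℤ) = #(placements (board m \ mainDiagonal m) k p) +
      (m - k + 1) * #(placements (board m \ mainDiagonal m) (k - 1) p) := by
  have hline : (mainDiagonal m : Set (ℕ × ℕ)).Pairwise Attacks := by
    intro x hx y hy _
    have := (mem_filter.1 hx).2
    have := (mem_filter.1 hy).2
    exact .inr (by simp only [diag]; omega)
  have hδ : ∀ x ∈ mainDiagonal m, (if x.2 < x.1 then 1 else 0 : ℤ) = 0 :=
    fun x hx => if_neg (by have := (mem_filter.1 hx).2; omega)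
  have hfiber : ∀ Q ∈ placements (board m \ mainDiagonal m) (k - 1) (p - 0),
      (#((mainDiagonal m).filter fun x => IsNonattacking (insert x Q)) : ℤ) = m - (k - 1) := by
    intro Q hQ
    obtain ⟨hQB, hQ, hk, -⟩ := mem_placements.1 hQ
    rw [card_filter_isNonattacking_insert_mainDiagonal hQB hQ, hk]
  rw [card_placements_eq_add_sum (L := mainDiagonal m) (filter_subset _ _) hline hδ,
    sum_congr rfl hfiber, sum_const, nsmul_eq_mul, sub_zero]
  ring

theorem card_placements_board_sdiff_mainDiagonal {m : ℕ} (hm : 1 ≤ m) (k p : ℤ) :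
    (#(placements (board m \ mainDiagonal m) k p) : ℤ) = #(placements (board (m - 1)) k p) +
      (m - p) * #(placements (board (m - 1)) (k - 1) (p - 1)) := by
  have hLB : lastColumnBelow m ⊆ board m \ mainDiagonal m := by
    intro x hx
    obtain ⟨hxB, hxm, hx⟩ := mem_filter.1 hx
    exact mem_sdiff.2 ⟨hxB, fun hd => by have := (mem_filter.1 hd).2; omega⟩
  have hline : (lastColumnBelow m : Set (ℕ × ℕ)).Pairwise Attacks := by
    intro x hx y hy _
    exact .inl ((mem_filter.1 hx).2.1.trans (mem_filter.1 hy).2.1.symm)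
  have hδ : ∀ x ∈ lastColumnBelow m, (if x.2 < x.1 then 1 else 0 : ℤ) = 1 := by
    intro x hx
    obtain ⟨-, hxm, hx⟩ := mem_filter.1 hx
    exact if_pos (hxm ▸ hx)
  have hfiber :
      ∀ Q ∈ placements ((board m \ mainDiagonal m) \ lastColumnBelow m) (k - 1) (p - 1),
        (#((lastColumnBelow m).filter fun x => IsNonattacking (insert x Q)) : ℤ) = m - p := by
    intro Q hQ
    obtain ⟨hQB, hQ, -, hp⟩ := mem_placements.1 hQ
    rw [card_filter_isNonattacking_insert_lastColumnBelow hm hQB hQ, hp]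
    ring
  have hregion : ∀ k p, #(placements ((board m \ mainDiagonal m) \ lastColumnBelow m) k p) =
      #(placements (board (m - 1)) k p) := fun k p => by
    rw [← map_raise_board, card_placements_map _ attacks_raise_iff below_raise_iff]
  rw [card_placements_eq_add_sum hLB hline hδ, sum_congr rfl hfiber, sum_const, nsmul_eq_mul,
    hregion, hregion]
  ring

end Anassa

open Anassa in
/-- Recurrence for nonattacking anassa placements with `p` pieces strictly below the
main diagonal. -/
theorem anassa_recurrence (m k p : ℕ) (hm : 1 ≤ m) :
    (anassaCount3 m k p : ℤ) =
      anassaCount3Z (m - 1) k p +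
        ((m : ℤ) - k + 1) * anassaCount3Z (m - 1) ((k : ℤ) - 1) p +
        ((m : ℤ) - p) * anassaCount3Z (m - 1) ((k : ℤ) - 1) ((p : ℤ) - 1) +
        ((m : ℤ) - p) * ((m : ℤ) - k + 1) *
          anassaCount3Z (m - 1) ((k : ℤ) - 2) ((p : ℤ) - 1) := by
  have hcount : (anassaCount3 m k p : ℤ) = anassaCount3Z m k p := by simp [anassaCount3Z]
  rw [hcount, anassaCount3Z_eq_card, card_placements_board,
    card_placements_board_sdiff_mainDiagonal hm, card_placements_board_sdiff_mainDiagonal hm]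
  simp only [anassaCount3Z_eq_card, show (k : ℤ) - 1 - 1 = k - 2 by ring]
  ring
end

section
/- For all integers m ≥ 0 and k ≥ 0, A_S(m,k,k) = S(m, m−k); that is, the number of placements of k nonattacking anassas on the m×m board with all k pieces strictly below the main diagonal equals the Stirling number of the second kind S(m, m−k). -/
open Finset

/-- Stirling number of the second kind `S(n,l)`. -/
def stirling2 : ℕ → ℕ → ℕ
  | 0, 0 => 1
  | 0, _ + 1 => 0
  | _ + 1, 0 => 0
  | n + 1, l + 1 => (l + 1) * stirling2 n (l + 1) + stirling2 n l

/-- Stirling number of the second kind with integer lower argument, extended by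
`S(n,l) = 0` whenever `l < 0`. -/
def stirlingZ (n : ℕ) (l : ℤ) : ℕ := if 0 ≤ l then stirling2 n l.toNat else 0

/-- The set of placements of `k` nonattacking anassas on the `m × m` board that are
all strictly below the diagonal. -/
def okSet (m k : ℕ) : Finset (Finset (ℕ × ℕ)) :=
  ((Finset.Icc 1 m ×ˢ Finset.Icc 1 m).powersetCard k).filter
    (fun P => (∀ a ∈ P, ∀ b ∈ P, a ≠ b →
        a.1 ≠ b.1 ∧ (a.1 : ℤ) - a.2 ≠ (b.1 : ℤ) - b.2) ∧
      ∀ a ∈ P, a.2 < a.1)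

lemma mem_okSet {m k : ℕ} {P : Finset (ℕ × ℕ)} :
    P ∈ okSet m k ↔ P.card = k ∧
      (∀ a ∈ P, 1 ≤ a.2 ∧ a.2 < a.1 ∧ a.1 ≤ m) ∧
      (∀ a ∈ P, ∀ b ∈ P, a ≠ b →
        a.1 ≠ b.1 ∧ (a.1 : ℤ) - a.2 ≠ (b.1 : ℤ) - b.2) := by
  simp only [okSet, mem_filter, mem_powersetCard, subset_iff, mem_product, mem_Icc]
  constructor
  · rintro ⟨⟨hsub, hcard⟩, hna, hlt⟩
    refine ⟨hcard, fun a ha => ?_, hna⟩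
    obtain ⟨⟨h1, h2⟩, h3, h4⟩ := hsub ha
    exact ⟨h3, hlt a ha, h2⟩
  · rintro ⟨hcard, hb, hna⟩
    refine ⟨⟨fun a ha => ?_, hcard⟩, hna, fun a ha => (hb a ha).2.1⟩
    obtain ⟨h1, h2, h3⟩ := hb a ha
    exact ⟨⟨by omega, h3⟩, h1, by omega⟩

lemma anassa_eq (m k : ℕ) : anassaCount3 m k k = (okSet m k).card := by
  unfold anassaCount3 okSet
  congr 1
  apply filter_congr
  intro P hP
  rw [mem_powersetCard] at hP
  constructor
  · rintro ⟨hna, hc⟩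
    refine ⟨hna, fun a ha => ?_⟩
    have hfe : P.filter (fun a => a.2 < a.1) = P :=
      eq_of_subset_of_card_le (filter_subset _ _) (by rw [hc, hP.2])
    rw [← hfe] at ha
    exact (mem_filter.mp ha).2
  · rintro ⟨hna, hall⟩
    exact ⟨hna, by rw [filter_true_of_mem hall, hP.2]⟩

lemma okSet_zero (m : ℕ) : (okSet m 0).card = 1 := by
  have : okSet m 0 = {∅} := by
    ext P
    simp only [mem_okSet, mem_singleton, card_eq_zero]
    constructor
    · rintro ⟨h, -, -⟩; exact h
    · rintro rfl
      refine ⟨rfl, ?_, ?_⟩ <;> simp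
  rw [this, card_singleton]

lemma okSet_nil (k : ℕ) : (okSet 0 (k + 1)).card = 0 := by
  rw [Finset.card_eq_zero]
  ext P
  simp only [mem_okSet, notMem_empty, iff_false, not_and]
  intro hcard hb
  obtain ⟨a, ha⟩ : P.Nonempty := by rw [← card_pos, hcard]; omega
  exfalso
  have := hb a ha
  omega

lemma inner_count {m k : ℕ} {P : Finset (ℕ × ℕ)} (hP : P ∈ okSet m k) :
    ((Finset.Icc 1 m).filter
      (fun j : ℕ => ∀ a ∈ P, (a.1 : ℤ) - a.2 ≠ (m : ℤ) + 1 - (j : ℤ))).card = m - k := by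
  obtain ⟨hcard, hb, hna⟩ := mem_okSet.mp hP
  have hsplit := Finset.card_filter_add_card_filter_not (s := Finset.Icc 1 m)
    (p := fun j : ℕ => ∀ a ∈ P, (a.1 : ℤ) - a.2 ≠ (m : ℤ) + 1 - (j : ℤ))
  have hneg : ((Finset.Icc 1 m).filter
      (fun j : ℕ => ¬ ∀ a ∈ P, (a.1 : ℤ) - a.2 ≠ (m : ℤ) + 1 - (j : ℤ))).card = k := by
    rw [← hcard]
    symm
    apply Finset.card_bij (fun a _ => m + 1 - (a.1 - a.2))
    · intro a ha
      obtain ⟨h1, h2, h3⟩ := hb a ha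
      rw [mem_filter, mem_Icc]
      refine ⟨⟨by omega, by omega⟩, ?_⟩
      intro hall
      exact hall a ha (by omega)
    · intro a ha b hbmem h
      by_contra hab
      obtain ⟨h1, h2, h3⟩ := hb a ha
      obtain ⟨h1', h2', h3'⟩ := hb b hbmem
      have := (hna a ha b hbmem hab).2
      omega
    · intro j hj
      rw [mem_filter, mem_Icc] at hj
      obtain ⟨⟨hj1, hj2⟩, hne⟩ := hj
      push_neg at hne
      obtain ⟨a, ha, hda⟩ := hne
      obtain ⟨h1, h2, h3⟩ := hb a ha
      exact ⟨a, ha, by omega⟩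
  rw [Nat.card_Icc] at hsplit
  omega

lemma okSet_split (m k : ℕ) :
    ((okSet (m + 1) (k + 1)).filter (fun P => ∀ a ∈ P, a.1 ≠ m + 1))
      = okSet m (k + 1) := by
  ext P
  simp only [mem_filter, mem_okSet]
  constructor
  · rintro ⟨⟨hcard, hbnd, hna⟩, htop⟩
    refine ⟨hcard, fun a ha => ?_, hna⟩
    have := hbnd a ha
    have := htop a ha
    omega
  · rintro ⟨hcard, hbnd, hna⟩
    refine ⟨⟨hcard, fun a ha => ?_, hna⟩, fun a ha => ?_⟩ <;>
      · have := hbnd a ha; omega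

lemma okSet_partB (m k : ℕ) :
    ((okSet (m + 1) (k + 1)).filter (fun P => ¬ ∀ a ∈ P, a.1 ≠ m + 1)).card
      = (m - k) * (okSet m k).card := by
  have hbij : ((okSet m k).sigma (fun P' => (Finset.Icc 1 m).filter
      (fun j : ℕ => ∀ a ∈ P', (a.1 : ℤ) - a.2 ≠ (m : ℤ) + 1 - (j : ℤ)))).card
      = ((okSet (m + 1) (k + 1)).filter (fun P => ¬ ∀ a ∈ P, a.1 ≠ m + 1)).card := by
    apply Finset.card_bij (fun x _ => insert (m + 1, x.2) x.1)
    · rintro ⟨P', j⟩ hx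
      rw [Finset.mem_sigma] at hx
      obtain ⟨hP', hj⟩ := hx
      obtain ⟨hcard, hbnd, hna⟩ := mem_okSet.mp hP'
      rw [mem_filter, mem_Icc] at hj
      obtain ⟨⟨hj1, hj2⟩, hjd⟩ := hj
      have hnotmem : (m + 1, j) ∉ P' := fun h => by
        have := hbnd _ h
        simp only [Prod.fst, Prod.snd] at this
        omega
      rw [mem_filter, mem_okSet]
      refine ⟨⟨?_, ?_, ?_⟩, ?_⟩
      · rw [card_insert_of_notMem hnotmem, hcard]
      · intro a ha
        rcases mem_insert.mp ha with rfl | ha'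
        · refine ⟨by omega, by omega, by omega⟩
        · have := hbnd a ha'; omega
      · intro a ha b hbm hab
        rcases mem_insert.mp ha with rfl | ha' <;>
          rcases mem_insert.mp hbm with rfl | hb'
        · exact absurd rfl hab
        · obtain ⟨u1, u2, u3⟩ := hbnd b hb'
          have h2 := hjd b hb'
          refine ⟨by omega, fun h => h2 ?_⟩
          rw [← h]
          push_cast
          ring
        · obtain ⟨u1, u2, u3⟩ := hbnd a ha'
          have h2 := hjd a ha'
          refine ⟨by omega, fun h => h2 ?_⟩
          rw [h]
          push_cast
          ring
        · exact hna a ha' b hb' hab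
      · intro h
        exact h (m + 1, j) (mem_insert_self _ _) rfl
    · rintro ⟨P₁, j₁⟩ hx ⟨P₂, j₂⟩ hy h
      rw [Finset.mem_sigma] at hx hy
      obtain ⟨hP₁, hj₁⟩ := hx
      obtain ⟨hP₂, hj₂⟩ := hy
      have hbnd₁ := (mem_okSet.mp hP₁).2.1
      have hbnd₂ := (mem_okSet.mp hP₂).2.1
      simp only at h hbnd₁ hbnd₂
      have hj : j₁ = j₂ := by
        have hmem : (m + 1, j₁) ∈ insert (m + 1, j₂) P₂ := by
          rw [← h]; exact mem_insert_self _ _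
        rcases mem_insert.mp hmem with heq | hmem'
        · exact (Prod.ext_iff.mp heq).2
        · exfalso
          obtain ⟨u1, u2, u3⟩ := hbnd₂ _ hmem'
          simp only [Prod.fst, Prod.snd] at u2 u3
          omega
      subst hj
      have hP : P₁ = P₂ := by
        ext a
        constructor
        · intro ha
          have hmem : a ∈ insert (m + 1, j₁) P₂ := by
            rw [← h]; exact mem_insert_of_mem ha
          rcases mem_insert.mp hmem with rfl | h'
          · exfalso
            obtain ⟨u1, u2, u3⟩ := hbnd₁ _ ha
            omega
          · exact h'
        · intro ha
          have hmem : a ∈ insert (m + 1, j₁) P₁ := by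
            rw [h]; exact mem_insert_of_mem ha
          rcases mem_insert.mp hmem with rfl | h'
          · exfalso
            obtain ⟨u1, u2, u3⟩ := hbnd₂ _ ha
            omega
          · exact h'
      subst hP
      rfl
    · intro P hP
      rw [mem_filter] at hP
      obtain ⟨hPok, hex⟩ := hP
      push_neg at hex
      obtain ⟨a₀, ha₀mem, ha₀⟩ := hex
      obtain ⟨i₀, j₀⟩ := a₀
      simp only at ha₀
      subst ha₀
      obtain ⟨hcard, hbnd, hna⟩ := mem_okSet.mp hPok
      refine ⟨⟨P.erase (m + 1, j₀), j₀⟩, ?_, ?_⟩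
      · rw [Finset.mem_sigma]
        constructor
        · rw [mem_okSet]
          refine ⟨?_, ?_, ?_⟩
          · rw [card_erase_of_mem ha₀mem, hcard]
            omega
          · intro a ha
            have ham := mem_of_mem_erase ha
            have hne := ne_of_mem_erase ha
            have h1 := hbnd a ham
            have h2 := (hna a ham _ ha₀mem hne).1
            simp only [Prod.fst] at h2
            omega
          · intro a ha b hbm hab
            exact hna a (mem_of_mem_erase ha) b (mem_of_mem_erase hbm) hab
        · rw [mem_filter, mem_Icc]
          dsimp only
          obtain ⟨v1, v2, v3⟩ := hbnd _ ha₀mem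
          simp only [Prod.fst, Prod.snd] at v1 v2 v3
          refine ⟨⟨by omega, by omega⟩, ?_⟩
          intro a ha
          have ham := mem_of_mem_erase ha
          have hne := ne_of_mem_erase ha
          have h2 := (hna a ham _ ha₀mem hne).2
          simp only [Prod.fst, Prod.snd] at h2
          intro hcontra
          apply h2
          rw [hcontra]
          push_cast
          ring
      · exact insert_erase ha₀mem
  rw [← hbij, Finset.card_sigma,
    Finset.sum_congr rfl (fun P' hP' => inner_count hP'), Finset.sum_const,
    smul_eq_mul, mul_comm]

lemma okSet_rec (m k : ℕ) :
    (okSet (m + 1) (k + 1)).card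
      = (okSet m (k + 1)).card + (m - k) * (okSet m k).card := by
  have h := Finset.card_filter_add_card_filter_not
    (s := okSet (m + 1) (k + 1)) (p := fun P => ∀ a ∈ P, a.1 ≠ m + 1)
  rw [okSet_split, okSet_partB] at h
  omega

lemma stirling2_eq_zero_of_lt : ∀ {n l : ℕ}, n < l → stirling2 n l = 0
  | 0, l + 1, _ => rfl
  | n + 1, l + 1, h => by
    show (l + 1) * stirling2 n (l + 1) + stirling2 n l = 0
    rw [stirling2_eq_zero_of_lt (by omega), stirling2_eq_zero_of_lt (by omega)]
    ring

lemma stirling2_self (m : ℕ) : stirling2 m m = 1 := by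
  induction m with
  | zero => rfl
  | succ n ih =>
    show (n + 1) * stirling2 n (n + 1) + stirling2 n n = 1
    rw [stirling2_eq_zero_of_lt (by omega), ih]
    ring

/-- The number of placements of `k` nonattacking anassas on the `m × m` board with all
`k` pieces strictly below the main diagonal equals `S(m, m−k)`. -/
theorem anassa_below_diagonal (m k : ℕ) :
    anassaCount3 m k k = stirlingZ m ((m : ℤ) - k) := by
  rw [anassa_eq]
  induction m generalizing k with
  | zero =>
    cases k with
    | zero => simp [okSet_zero, stirlingZ, stirling2]
    | succ k =>
      rw [okSet_nil]
      rw [stirlingZ, if_neg (by push_cast; omega)]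
  | succ m ih =>
    cases k with
    | zero =>
      rw [okSet_zero]
      have e : stirlingZ (m + 1) (((m + 1 : ℕ) : ℤ) - ((0 : ℕ) : ℤ)) = 1 := by
        simp only [stirlingZ, if_pos (by push_cast; omega : (0:ℤ) ≤ ((m + 1 : ℕ) : ℤ) - ((0 : ℕ) : ℤ))]
        rw [show (((m + 1 : ℕ) : ℤ) - ((0 : ℕ) : ℤ)).toNat = m + 1 by omega, stirling2_self]
      rw [e]
    | succ k =>
      rw [okSet_rec, ih (k + 1), ih k]
      rcases lt_or_ge k m with hk | hk
      · set l := m - (k + 1) with hl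
        have e1 : stirlingZ m ((m : ℤ) - ((k + 1 : ℕ) : ℤ)) = stirling2 m l := by
          simp only [stirlingZ, if_pos (show (0:ℤ) ≤ (m : ℤ) - ((k + 1 : ℕ) : ℤ) by push_cast; omega)]
          congr 1
          omega
        have e2 : stirlingZ m ((m : ℤ) - (k : ℤ)) = stirling2 m (l + 1) := by
          simp only [stirlingZ, if_pos (show (0:ℤ) ≤ (m : ℤ) - ((k : ℕ) : ℤ) by omega)]
          congr 1
          omega
        have e3 : stirlingZ (m + 1) (((m + 1 : ℕ) : ℤ) - ((k + 1 : ℕ) : ℤ)) = stirling2 (m + 1) (l + 1) := by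
          simp only [stirlingZ, if_pos (show (0:ℤ) ≤ ((m + 1 : ℕ) : ℤ) - ((k + 1 : ℕ) : ℤ) by push_cast; omega)]
          congr 1
          omega
        rw [e1, e2, e3, show m - k = l + 1 by omega,
          show stirling2 (m + 1) (l + 1) = (l + 1) * stirling2 m (l + 1) + stirling2 m l from rfl]
        ring
      · have e1 : stirlingZ m ((m : ℤ) - ((k + 1 : ℕ) : ℤ)) = 0 := by
          simp only [stirlingZ, if_neg (show ¬ (0:ℤ) ≤ (m : ℤ) - ((k + 1 : ℕ) : ℤ) by push_cast; omega)]
        rw [e1, show m - k = 0 by omega]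
        rcases eq_or_lt_of_le hk with rfl | hk'
        · have e3 : stirlingZ (m + 1) (((m + 1 : ℕ) : ℤ) - ((m + 1 : ℕ) : ℤ)) = 0 := by
            simp only [stirlingZ, if_pos (show (0:ℤ) ≤ ((m + 1 : ℕ) : ℤ) - ((m + 1 : ℕ) : ℤ) by omega)]
            rw [show ((((m + 1 : ℕ) : ℤ)) - ((m + 1 : ℕ) : ℤ)).toNat = 0 by omega]
            rfl
          rw [e3]
          ring
        · have e3 : stirlingZ (m + 1) (((m + 1 : ℕ) : ℤ) - ((k + 1 : ℕ) : ℤ)) = 0 := by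
            simp only [stirlingZ, if_neg (show ¬ (0:ℤ) ≤ ((m + 1 : ℕ) : ℤ) - ((k + 1 : ℕ) : ℤ) by push_cast; omega)]
          rw [e3]
          ring
end

section
/- For all integers m and k with 0 ≤ k ≤ m, ∑_{j=0}^{k} (−1)^j · (m−k+j)_j · S(m+1, m−k+j+1) = S(m, m−k). -/
open Finset

/-- Falling factorial `(x)_q = x(x−1)⋯(x−q+1)` for an integer `x`, with `(x)_0 = 1`. -/
def zfall (x : ℤ) (q : ℕ) : ℤ := ∏ i ∈ Finset.range q, (x - i)

lemma stirling2_eq_zero : ∀ n l : ℕ, n < l → stirling2 n l = 0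
  | 0, 0, h => by omega
  | 0, _ + 1, _ => rfl
  | n + 1, 0, h => by omega
  | n + 1, l + 1, h => by
    show (l + 1) * stirling2 n (l + 1) + stirling2 n l = 0
    rw [stirling2_eq_zero n (l + 1) (by omega), stirling2_eq_zero n l (by omega)]
    ring

lemma zfall_succ (x : ℤ) (q : ℕ) : zfall (x + 1) (q + 1) = (x + 1) * zfall x q := by
  unfold zfall
  rw [Finset.prod_range_succ']
  push_cast
  rw [mul_comm]
  congr 1
  · norm_num
  · apply Finset.prod_congr rfl
    intro i _
    push_cast
    ring

/-- Telescoping identity: for `0 ≤ k ≤ m`,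
`∑_{j=0}^{k} (−1)^j (m−k+j)_j S(m+1, m−k+j+1) = S(m, m−k)`. -/
theorem stirling_telescoping (m k : ℕ) (hk : k ≤ m) :
    ∑ j ∈ Finset.range (k + 1),
        (-1 : ℤ) ^ j * zfall ((m : ℤ) - k + j) j * (stirling2 (m + 1) (m - k + j + 1) : ℤ) =
      stirling2 m (m - k) := by
  set f : ℕ → ℤ := fun j =>
    (-1 : ℤ) ^ j * zfall ((m : ℤ) - k + j) j * (stirling2 m (m - k + j) : ℤ) with hf
  have hcast : ((m - k : ℕ) : ℤ) = (m : ℤ) - k := by omega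
  have hterm : ∀ j : ℕ, (-1 : ℤ) ^ j * zfall ((m : ℤ) - k + j) j *
      (stirling2 (m + 1) (m - k + j + 1) : ℤ) = f j - f (j + 1) := by
    intro j
    have hrec : stirling2 (m + 1) (m - k + j + 1) =
        (m - k + j + 1) * stirling2 m (m - k + j + 1) + stirling2 m (m - k + j) := rfl
    have hz : zfall ((m : ℤ) - k + (j + 1)) (j + 1) =
        ((m : ℤ) - k + j + 1) * zfall ((m : ℤ) - k + j) j := by
      have := zfall_succ ((m : ℤ) - k + j) j
      convert this using 2 <;> push_cast <;> ring
    simp only [hf, hrec, hz]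
    have h2 : m - k + (j + 1) = m - k + j + 1 := by omega
    rw [h2]
    push_cast [hcast]
    rw [hz]
    ring
  rw [Finset.sum_congr rfl fun j _ => hterm j, Finset.sum_range_sub' f]
  have h1 : m - k + (k + 1) = m + 1 := by omega
  simp [hf, zfall, h1, stirling2_eq_zero m (m + 1) (by omega)]
end

section
/- For every integer k ≥ 0, ∑_{j=0}^{⌈k/2⌉} (−1)^j · (k)_j · (k−j)! · 2^{k−2j} · (C(k−j, j−1) + C(k−j+1, j)) = k!, as an equality of rational numbers (note 2^{k−2j} may be a negative power of 2). -/
open Finset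

/-- The Chebyshev-type sum `A n = ∑_{j=0}^{n} (-1)^j C(n-j, j) 2^{n-2j}` over `ℚ`. -/
private def AA (n : ℕ) : ℚ :=
  ∑ j ∈ Finset.range (n + 1),
    (-1 : ℚ) ^ j * (Nat.choose (n - j) j : ℚ) * (2 : ℚ) ^ ((n : ℤ) - 2 * j)

/-- Auxiliary sum. -/
private def BB (n : ℕ) : ℚ :=
  ∑ j ∈ Finset.range (n + 1),
    (-1 : ℚ) ^ j * (Nat.choose (n - j) (j + 1) : ℚ) * (2 : ℚ) ^ ((n : ℤ) - 1 - 2 * j)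

private lemma choose_pascal (n j : ℕ) :
    Nat.choose (n + 1 - j) (j + 1) = Nat.choose (n - j) j + Nat.choose (n - j) (j + 1) := by
  rcases le_or_gt j n with h | h
  · obtain ⟨m, rfl⟩ := Nat.exists_eq_add_of_le h
    simp only [Nat.add_sub_cancel_left, show j + m + 1 - j = m + 1 by omega]
    exact Nat.choose_succ_succ m j
  · have h1 : n + 1 - j = 0 := by omega
    have h2 : n - j = 0 := by omega
    rcases j with _ | j
    · omega
    · simp [h1, h2]

private lemma two_zpow_sub (a b : ℤ) : (2 : ℚ) ^ (a - b) = 2 ^ a / 2 ^ b :=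
  zpow_sub₀ (by norm_num) a b

private lemma AB (n : ℕ) : AA (n + 1) = 2 ^ ((n : ℤ) + 1) - BB n := by
  rw [AA, Finset.sum_range_succ']
  have h0 : (-1 : ℚ) ^ 0 * (Nat.choose (n + 1 - 0) 0 : ℚ) * (2 : ℚ) ^ (((n+1 : ℕ) : ℤ) - 2 * (0:ℕ)) =
      2 ^ ((n : ℤ) + 1) := by
    push_cast
    norm_num
  rw [h0]
  have h1 : ∀ j ∈ Finset.range (n + 1),
      (-1 : ℚ) ^ (j+1) * (Nat.choose (n + 1 - (j+1)) (j+1) : ℚ) * (2 : ℚ) ^ (((n+1:ℕ) : ℤ) - 2 * ((j+1:ℕ):ℤ)) =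
      -((-1 : ℚ) ^ j * (Nat.choose (n - j) (j + 1) : ℚ) * (2 : ℚ) ^ ((n : ℤ) - 1 - 2 * j)) := by
    intro j _
    have e1 : n + 1 - (j + 1) = n - j := by omega
    have e2 : ((n+1:ℕ) : ℤ) - 2 * ((j+1:ℕ):ℤ) = (n : ℤ) - 1 - 2 * j := by push_cast; ring
    rw [e1, e2, pow_succ]
    ring
  rw [Finset.sum_congr rfl h1, Finset.sum_neg_distrib, BB]
  ring

private lemma AA_rec (n : ℕ) : AA (n + 2) = 2 * AA (n + 1) - AA n := by
  have hS1 : ∑ j ∈ Finset.range (n + 2),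
      (-1 : ℚ) ^ j * (Nat.choose (n - j) j : ℚ) * (2 : ℚ) ^ ((n : ℤ) - 2 * j) = AA n := by
    rw [Finset.sum_range_succ]
    have : Nat.choose (n - (n+1)) (n+1) = 0 := by
      have : n - (n+1) = 0 := by omega
      rw [this]; exact Nat.choose_eq_zero_of_lt (by omega)
    rw [this]
    simp [AA]
  have hS2 : ∑ j ∈ Finset.range (n + 2),
      (-1 : ℚ) ^ j * (Nat.choose (n - j) (j+1) : ℚ) * (2 : ℚ) ^ ((n : ℤ) - 1 - 2 * j) = BB n := by
    rw [Finset.sum_range_succ]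
    have : Nat.choose (n - (n+1)) (n+2) = 0 := by
      have : n - (n+1) = 0 := by omega
      rw [this]; exact Nat.choose_eq_zero_of_lt (by omega)
    rw [this]
    simp [BB]
  have expand : AA (n + 2) = 2 ^ ((n:ℤ) + 2) - AA n - 2 * BB n := by
    rw [AA, Finset.sum_range_succ']
    have h0 : (-1 : ℚ) ^ 0 * (Nat.choose (n + 2 - 0) 0 : ℚ) * (2 : ℚ) ^ (((n+2 : ℕ) : ℤ) - 2 * ((0:ℕ):ℤ)) =
        2 ^ ((n : ℤ) + 2) := by
      push_cast
      norm_num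
    rw [h0]
    have h1 : ∀ j ∈ Finset.range (n + 2),
        (-1 : ℚ) ^ (j+1) * (Nat.choose (n + 2 - (j+1)) (j+1) : ℚ) * (2 : ℚ) ^ (((n+2:ℕ) : ℤ) - 2 * ((j+1:ℕ):ℤ)) =
        -((-1 : ℚ) ^ j * (Nat.choose (n - j) j : ℚ) * (2 : ℚ) ^ ((n : ℤ) - 2 * j))
          - 2 * ((-1 : ℚ) ^ j * (Nat.choose (n - j) (j+1) : ℚ) * (2 : ℚ) ^ ((n : ℤ) - 1 - 2 * j)) := by
      intro j _
      have e0 : n + 2 - (j + 1) = n + 1 - j := by omega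
      rw [e0, choose_pascal]
      have e2 : ((n+2:ℕ) : ℤ) - 2 * ((j+1:ℕ):ℤ) = (n : ℤ) - 2 * j := by push_cast; ring
      have e3 : (n : ℤ) - 2 * j = ((n : ℤ) - 1 - 2 * j) + 1 := by ring
      rw [e2, pow_succ]
      rw [show (2:ℚ) ^ ((n : ℤ) - 2 * (j:ℤ)) = 2 ^ ((n : ℤ) - 1 - 2 * j) * 2 by
        rw [e3, zpow_add₀ (by norm_num : (2:ℚ) ≠ 0)]; norm_num]
      push_cast
      ring
    rw [Finset.sum_congr rfl h1, Finset.sum_sub_distrib, Finset.sum_neg_distrib,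
      ← Finset.mul_sum, hS1, hS2]
    ring
  have hb := AB n
  rw [expand, show ((n:ℤ) + 2) = ((n:ℤ) + 1) + 1 by ring,
    zpow_add₀ (by norm_num : (2:ℚ) ≠ 0)]
  rw [AB n]
  ring

private lemma AA_eq (n : ℕ) : AA n = n + 1 := by
  induction n using Nat.twoStepInduction with
  | zero => simp [AA]
  | one =>
    rw [AA]
    rw [Finset.sum_range_succ, Finset.sum_range_one]
    norm_num
  | more n ih1 ih2 =>
    rw [AA_rec, ih1, ih2]
    push_cast
    ring

private lemma zfall_mul_fact (k : ℕ) : ∀ j, j ≤ k →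
    (zfall (k : ℤ) j : ℚ) * (Nat.factorial (k - j) : ℚ) = (Nat.factorial k : ℚ) := by
  intro j
  induction j with
  | zero => intro _; simp [zfall]
  | succ j ih =>
    intro hj
    have hj' : j ≤ k := by omega
    have hz : zfall (k : ℤ) (j+1) = zfall (k : ℤ) j * ((k : ℤ) - j) := by
      rw [zfall, Finset.prod_range_succ]; rfl
    have hf : (k - j : ℕ) = (k - (j+1)) + 1 := by omega
    have hfact : (Nat.factorial (k - j) : ℚ) = ((k:ℚ) - j) * Nat.factorial (k - (j+1)) := by
      rw [hf, Nat.factorial_succ]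
      push_cast
      have : ((k - (j+1) : ℕ) : ℚ) = (k : ℚ) - j - 1 := by
        have : ((k - (j+1) : ℕ) : ℤ) = (k : ℤ) - j - 1 := by omega
        exact_mod_cast congrArg (fun x : ℤ => (x : ℚ)) this
      rw [this]
      ring
    have := ih hj'
    rw [hfact] at this
    rw [hz]
    push_cast
    nlinarith [this]

/-- `∑_{j=0}^{⌈k/2⌉} (−1)^j (k)_j (k−j)! 2^{k−2j} (C(k−j, j−1) + C(k−j+1, j)) = k!`,
as rational numbers (`2^{k−2j}` may be a negative power of `2`, and `C(k−j, j−1) = 0`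
when `j = 0`). -/
theorem anassa_combinatorial_identity (k : ℕ) :
    ∑ j ∈ Finset.range ((k + 1) / 2 + 1),
        (-1 : ℚ) ^ j * zfall (k : ℤ) j * Nat.factorial (k - j) *
          (2 : ℚ) ^ ((k : ℤ) - 2 * j) *
          ((if j = 0 then 0 else (Nat.choose (k - j) (j - 1) : ℚ)) +
            Nat.choose (k - j + 1) j) =
      Nat.factorial k := by
  rcases Nat.eq_zero_or_pos k with rfl | hk
  · simp [zfall]
  obtain ⟨m, rfl⟩ : ∃ m, k = m + 1 := ⟨k - 1, by omega⟩
  set K := m + 1 with hK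
  -- Step 1: factor out k!
  have key : ∀ j ∈ Finset.range ((K + 1) / 2 + 1),
      (-1 : ℚ) ^ j * zfall (K : ℤ) j * Nat.factorial (K - j) *
          (2 : ℚ) ^ ((K : ℤ) - 2 * j) *
          ((if j = 0 then 0 else (Nat.choose (K - j) (j - 1) : ℚ)) +
            Nat.choose (K - j + 1) j) =
      (Nat.factorial K : ℚ) * ((-1 : ℚ) ^ j * (2 : ℚ) ^ ((K : ℤ) - 2 * j) *
          ((if j = 0 then 0 else (Nat.choose (K - j) (j - 1) : ℚ)) +
            Nat.choose (K - j + 1) j)) := by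
    intro j hj
    have hjK : j ≤ K := by
      simp only [Finset.mem_range] at hj
      omega
    have := zfall_mul_fact K j hjK
    rw [show (-1 : ℚ) ^ j * zfall (K : ℤ) j * Nat.factorial (K - j) =
      (-1:ℚ)^j * ((zfall (K : ℤ) j : ℚ) * (Nat.factorial (K - j) : ℚ)) by ring, this]
    ring
  rw [Finset.sum_congr rfl key, ← Finset.mul_sum]
  have hfne : (Nat.factorial K : ℚ) ≠ 0 := by positivity
  nth_rewrite 2 [show (Nat.factorial K : ℚ) = (Nat.factorial K : ℚ) * 1 from (mul_one _).symm]
  refine (mul_right_inj' hfne).mpr ?_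
  -- split the sum into the two choose parts
  have hsplit : ∀ j ∈ Finset.range ((K + 1) / 2 + 1),
      (-1:ℚ)^j * (2:ℚ)^((K:ℤ) - 2*j) *
        ((if j = 0 then 0 else ((Nat.choose (K-j) (j-1)):ℚ)) + (Nat.choose (K-j+1) j : ℚ)) =
      ((-1:ℚ)^j * (2:ℚ)^((K:ℤ) - 2*j) * (if j = 0 then 0 else ((Nat.choose (K-j) (j-1)):ℚ))) +
      ((-1:ℚ)^j * (2:ℚ)^((K:ℤ) - 2*j) * (Nat.choose (K-j+1) j : ℚ)) := fun j _ => by ring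
  rw [Finset.sum_congr rfl hsplit, Finset.sum_add_distrib]
  have hK2 : (K + 1) / 2 = (m + 2) / 2 := by omega
  -- first part
  have T1 : ∑ j ∈ Finset.range ((K + 1) / 2 + 1),
      (-1:ℚ)^j * (2:ℚ)^((K:ℤ) - 2*j) * (if j = 0 then 0 else ((Nat.choose (K-j) (j-1)):ℚ)) =
      -(1/2) * AA m := by
    rw [Finset.sum_range_succ']
    have h0 : (-1:ℚ)^0 * (2:ℚ)^((K:ℤ) - 2*((0:ℕ):ℤ)) *
        (if (0:ℕ) = 0 then 0 else ((Nat.choose (K-0) (0-1)):ℚ)) = 0 := by simp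
    rw [h0, add_zero]
    have h1 : ∀ i ∈ Finset.range ((K + 1) / 2),
        (-1:ℚ)^(i+1) * (2:ℚ)^((K:ℤ) - 2*((i+1:ℕ):ℤ)) *
          (if (i+1:ℕ) = 0 then 0 else ((Nat.choose (K-(i+1)) ((i+1)-1)):ℚ)) =
        (-(1/2)) * ((-1:ℚ)^i * (Nat.choose (m-i) i : ℚ) * (2:ℚ)^((m:ℤ) - 2*i)) := by
      intro i _
      have e1 : K - (i+1) = m - i := by omega
      have e2 : (i+1) - 1 = i := by omega
      have e3 : (K:ℤ) - 2*((i+1:ℕ):ℤ) = ((m:ℤ) - 2*i) - 1 := by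
        simp only [hK]; push_cast; ring
      rw [if_neg (by omega), e1, e2, e3, two_zpow_sub, pow_succ]
      norm_num
      ring
    rw [Finset.sum_congr rfl h1, ← Finset.mul_sum]
    have hext : ∑ i ∈ Finset.range ((K + 1) / 2),
        (-1:ℚ)^i * (Nat.choose (m-i) i : ℚ) * (2:ℚ)^((m:ℤ) - 2*i) = AA m := by
      rw [AA]
      apply Finset.sum_subset
      · intro x hx
        simp only [Finset.mem_range] at *
        omega
      · intro x _ hx
        simp only [Finset.mem_range, not_lt] at hx
        have : Nat.choose (m - x) x = 0 := Nat.choose_eq_zero_of_lt (by omega)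
        rw [this]
        norm_num
    rw [hext]
  -- second part
  have T2 : ∑ j ∈ Finset.range ((K + 1) / 2 + 1),
      (-1:ℚ)^j * (2:ℚ)^((K:ℤ) - 2*j) * (Nat.choose (K-j+1) j : ℚ) =
      (1/2) * AA (m+2) := by
    have h1 : ∀ j ∈ Finset.range ((K + 1) / 2 + 1),
        (-1:ℚ)^j * (2:ℚ)^((K:ℤ) - 2*j) * (Nat.choose (K-j+1) j : ℚ) =
        (1/2) * ((-1:ℚ)^j * (Nat.choose ((m+2)-j) j : ℚ) * (2:ℚ)^(((m+2:ℕ):ℤ) - 2*j)) := by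
      intro j hj
      simp only [Finset.mem_range] at hj
      have e1 : K - j + 1 = (m+2) - j := by omega
      have e2 : (K:ℤ) - 2*(j:ℤ) = (((m+2:ℕ):ℤ) - 2*j) - 1 := by
        simp only [hK]; push_cast; ring
      rw [e1, e2, two_zpow_sub]
      norm_num
      ring
    rw [Finset.sum_congr rfl h1, ← Finset.mul_sum]
    have hext : ∑ j ∈ Finset.range ((K + 1) / 2 + 1),
        (-1:ℚ)^j * (Nat.choose ((m+2)-j) j : ℚ) * (2:ℚ)^(((m+2:ℕ):ℤ) - 2*j) = AA (m+2) := by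
      rw [AA]
      apply Finset.sum_subset
      · intro x hx
        simp only [Finset.mem_range] at *
        omega
      · intro x _ hx
        simp only [Finset.mem_range, not_lt] at hx
        have : Nat.choose ((m+2) - x) x = 0 := Nat.choose_eq_zero_of_lt (by omega)
        rw [this]
        norm_num
    rw [hext]
  rw [T1, T2, AA_eq, AA_eq]
  push_cast
  ring
end
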